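/- For n ≥ 1, fp∫₀¹ x^{-n}/(1+x) dx = (−1)^n ( log 2 + Σ_{l=1}^{n−1} (−1)^l / l ). -/

import Mathlib

/-!
Since `1/(1+x) = ∑_{k<n} (-x)^k + (-x)^n/(1+x)`, the integrand `x^{-n}/(1+x)` splits into the
poles `(-1)^k x^{k-n}` (`k < n`) and the regular part `(-1)^n/(1+x)`. For `k < n-1` the pole
integrates over `[ε, 1]` to `(-1)^k/(k-n+1)` plus exactly the `k`-th counterterm, and the simple
pole `x^{-1}` to the cancelled logarithm; the regular part contributes
`(-1)^n (log 2 - log (1+ε))`. Reflecting `k ↦ n-1-k` turns the constants into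
`(-1)^n ∑_{l=1}^{n-1} (-1)^l/l`.
-/

open Real Filter Set intervalIntegral

theorem zpow_neg_div_one_add_eq_sum {K : Type*} [Field K] {x : K} (hx : x ≠ 0) (hx1 : 1 + x ≠ 0)
    (n : ℕ) :
    x ^ (-(n : ℤ)) / (1 + x) = ∑ k ∈ Finset.range n, (-1) ^ k * x ^ ((k : ℤ) - n)
      + (-1) ^ n / (1 + x) := by
  have telescope : ∑ k ∈ Finset.range n, (-1) ^ k * x ^ ((k : ℤ) - n) * (1 + x)
      = x ^ (-(n : ℤ)) - (-1) ^ n := by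
    convert Finset.sum_range_sub (fun k : ℕ => -(-1 : K) ^ k * x ^ ((k : ℤ) - n)) n using 1
    · refine Finset.sum_congr rfl fun k _ => ?_
      rw [Nat.cast_succ, add_sub_right_comm, zpow_add_one₀ hx]
      ring
    · simp only [Nat.cast_zero, zero_sub, pow_zero, sub_self, zpow_zero]; ring
  rw [div_eq_iff hx1, add_mul, Finset.sum_mul, telescope, div_mul_cancel₀ _ hx1]
  ring

theorem integral_inv_one_add {a b : ℝ} (ha : -1 < a) (hb : -1 < b) :
    ∫ x in a..b, (1 + x)⁻¹ = log (1 + b) - log (1 + a) := by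
  rw [integral_comp_add_left (fun x : ℝ => x⁻¹) 1,
    integral_inv (notMem_uIcc_of_lt (by linarith) (by linarith)),
    log_div (by linarith) (by linarith)]

theorem integral_zpow_neg_succ_div_one_add (m : ℕ) {ε : ℝ} (hε : 0 < ε) :
    ∫ x in ε..1, x ^ (-((m + 1 : ℕ) : ℤ)) / (1 + x)
      = ∑ k ∈ Finset.range m, (-1) ^ k * (1 - ε ^ ((k : ℤ) - m)) / (k - m)
        - (-1) ^ m * log ε + (-1) ^ (m + 1) * (log 2 - log (1 + ε)) := by
  have h0 : (0 : ℝ) ∉ uIcc ε 1 := notMem_uIcc_of_lt hε one_pos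
  have hpos : ∀ x ∈ uIcc ε 1, 0 < x := fun x hx => (lt_min hε one_pos).trans_le hx.1
  have hint (k : ℕ) : IntervalIntegrable
      (fun x : ℝ => (-1) ^ k * x ^ ((k : ℤ) - (m + 1 : ℕ))) MeasureTheory.volume ε 1 :=
    (intervalIntegrable_zpow (Or.inr h0)).const_mul _
  have hint_inv : IntervalIntegrable (fun x : ℝ => (-1) ^ (m + 1) / (1 + x))
      MeasureTheory.volume ε 1 := by
    refine ContinuousOn.intervalIntegrable (continuousOn_const.div (by fun_prop) fun x hx => ?_)
    linarith [hpos x hx]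
  have hpole : ∀ k < m, ∫ x in ε..1, (-1) ^ k * x ^ ((k : ℤ) - (m + 1 : ℕ))
      = (-1) ^ k * (1 - ε ^ ((k : ℤ) - m)) / (k - m) := by
    intro k hk
    rw [integral_const_mul, integral_zpow (Or.inr ⟨by omega, h0⟩), one_zpow,
      show (k : ℤ) - (m + 1 : ℕ) + 1 = k - m by push_cast; ring]
    push_cast
    ring
  have hlog :
      ∫ x in ε..1, (-1) ^ m * x ^ ((m : ℤ) - (m + 1 : ℕ)) = -((-1) ^ m * log ε) := by
    rw [integral_const_mul, show (m : ℤ) - (m + 1 : ℕ) = -1 by push_cast; ring]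
    simp only [zpow_neg_one]
    rw [integral_inv h0, log_div one_ne_zero hε.ne', log_one]
    ring
  have hregular :
      ∫ x in ε..1, (-1) ^ (m + 1) / (1 + x) = (-1) ^ (m + 1) * (log 2 - log (1 + ε)) := by
    simp only [div_eq_mul_inv, integral_const_mul]
    rw [integral_inv_one_add (by linarith) (by norm_num)]
    norm_num
  have hint_sum : IntervalIntegrable
      (fun x : ℝ => ∑ k ∈ Finset.range (m + 1), (-1) ^ k * x ^ ((k : ℤ) - (m + 1 : ℕ)))
      MeasureTheory.volume ε 1 := by
    simpa only [Finset.sum_fn] using IntervalIntegrable.sum _ fun k _ => hint k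
  rw [integral_congr fun x hx =>
      zpow_neg_div_one_add_eq_sum (hpos x hx).ne' (by linarith [hpos x hx]) (m + 1),
    integral_add hint_sum hint_inv, integral_finsetSum fun k _ => hint k, Finset.sum_range_succ,
    Finset.sum_congr rfl fun k hk => hpole k (Finset.mem_range.1 hk), hlog, hregular]
  ring

theorem sum_range_neg_one_pow_div_sub (m : ℕ) :
    ∑ k ∈ Finset.range m, (-1 : ℝ) ^ k / (k - m)
      = (-1) ^ (m + 1) * ∑ l ∈ Finset.Icc 1 m, (-1) ^ l / (l : ℝ) := by
  have hreflect := Finset.sum_Ico_reflect (fun l => (-1 : ℝ) ^ (m + 1) * ((-1) ^ l / l)) 0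
    (Nat.le_succ m)
  rw [Nat.add_sub_cancel_left, Nat.sub_zero, ← Finset.range_eq_Ico] at hreflect
  rw [Finset.mul_sum, ← Finset.Ico_add_one_right_eq_Icc, ← hreflect]
  refine Finset.sum_congr rfl fun k hk => ?_
  obtain ⟨j, rfl⟩ := Nat.exists_eq_add_of_lt (Finset.mem_range.1 hk)
  rw [show k + j + 1 - k = j + 1 by omega]
  push_cast
  rw [show (k : ℝ) - (k + j + 1) = -(j + 1) by ring, pow_add, pow_add, pow_add]
  field_simp
  rw [pow_succ, ← mul_assoc, ← mul_pow]
  norm_num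

theorem integral_zpow_neg_succ_div_one_add_sub_singular_part (m : ℕ) {ε : ℝ} (hε : 0 < ε) :
    (∫ x in ε..1, x ^ (-((m + 1 : ℕ) : ℤ)) / (1 + x))
      - ∑ k ∈ Finset.range m,
          ε ^ ((k : ℤ) + 1 - (m + 1 : ℕ)) * ((-1) ^ k * (k.factorial : ℝ))
            / (k.factorial * (((m + 1 : ℕ) : ℝ) - 1 - k))
      + log ε * ((-1) ^ m * (m.factorial : ℝ)) / m.factorial
      = (-1) ^ (m + 1) * (log 2 + ∑ l ∈ Finset.Icc 1 m, (-1) ^ l / (l : ℝ))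
        - (-1) ^ (m + 1) * log (1 + ε) := by
  have hfact (k : ℕ) : (k.factorial : ℝ) ≠ 0 := Nat.cast_ne_zero.2 k.factorial_ne_zero
  have hpole : ∀ k ∈ Finset.range m,
      (-1) ^ k * (1 - ε ^ ((k : ℤ) - m)) / (k - m)
        - ε ^ ((k : ℤ) + 1 - (m + 1 : ℕ)) * ((-1) ^ k * (k.factorial : ℝ))
            / (k.factorial * (((m + 1 : ℕ) : ℝ) - 1 - k))
      = (-1) ^ k / (k - m) := by
    intro k hk
    have hkm : (k : ℝ) - m ≠ 0 := sub_ne_zero.2 (by exact_mod_cast (Finset.mem_range.1 hk).ne)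
    rw [show (k : ℤ) + 1 - (m + 1 : ℕ) = (k : ℤ) - m by push_cast; ring,
      show ((m + 1 : ℕ) : ℝ) - 1 - k = -(k - m) by push_cast; ring]
    field_simp [hfact k]
    ring
  have hsum := Finset.sum_congr rfl hpole
  rw [Finset.sum_sub_distrib, sum_range_neg_one_pow_div_sub] at hsum
  rw [integral_zpow_neg_succ_div_one_add m hε, mul_div_assoc, mul_div_cancel_right₀ _ (hfact m)]
  linear_combination hsum

/-- For `n ≥ 1`, `fp∫₀¹ x^{-n}/(1+x) dx = (−1)^n (log 2 + Σ_{l=1}^{n−1} (−1)^l / l)`.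
Here `f(x) = 1/(1+x)` has `f^{(k)}(0) = (−1)^k k!`, and the finite part is
`lim_{ε→0⁺}( ∫_ε^1 x^{-n} f(x) dx − Σ_{k=0}^{n-2} ε^{k+1−n} f^{(k)}(0)/(k!(n−1−k))
+ (log ε) f^{(n−1)}(0)/(n−1)! )`. -/
theorem fp_integral_inv_one_add (n : ℕ) (hn : 1 ≤ n) :
    Filter.Tendsto
      (fun ε : ℝ =>
        (∫ x in ε..1, x ^ (-(n : ℤ)) / (1 + x))
        - ∑ k ∈ Finset.range (n - 1),
            ε ^ ((k : ℤ) + 1 - n) * ((-1) ^ k * (k.factorial : ℝ))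
              / (k.factorial * ((n : ℝ) - 1 - k))
        + Real.log ε * ((-1) ^ (n - 1) * ((n - 1).factorial : ℝ)) / (n - 1).factorial)
      (nhdsWithin 0 (Set.Ioi 0))
      (nhds ((-1) ^ n * (Real.log 2 + ∑ l ∈ Finset.Icc 1 (n - 1), (-1) ^ l / (l : ℝ)))) := by
  obtain ⟨m, rfl⟩ := Nat.exists_eq_add_of_le' hn
  simp only [Nat.add_sub_cancel]
  set c : ℝ := (-1) ^ (m + 1) * (log 2 + ∑ l ∈ Finset.Icc 1 m, (-1) ^ l / (l : ℝ))
  have hlimit : Tendsto (fun ε : ℝ => c - (-1) ^ (m + 1) * log (1 + ε)) (nhds 0)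
      (nhds (c - (-1) ^ (m + 1) * log (1 + 0))) :=
    tendsto_const_nhds.sub <| tendsto_const_nhds.mul <|
      ((continuousAt_log (by norm_num)).comp (by fun_prop)).tendsto
  rw [add_zero, log_one, mul_zero, sub_zero] at hlimit
  exact (tendsto_nhdsWithin_of_tendsto_nhds hlimit).congr' <| eventually_nhdsWithin_of_forall
    fun ε hε => (integral_zpow_neg_succ_div_one_add_sub_singular_part m hε).symm
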